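/- arXiv:1209.0429 — 9 statements merged into one kernel-verified Lean document; each statement's English description precedes it below -/
import Mathlib

section
/- The elements D⁰_1, D⁰_2, … are algebraically independent in SH⁺: the F-algebra homomorphism from the polynomial ring F[T_1, T_2, …] (in countably many variables) to SH⁺ sending T_l to D⁰_l is injective. -/
noncomputable section

/-- The base field `F = ℂ(κ)`, rational functions over `ℂ`. -/
abbrev F : Type := RatFunc ℂ

/-- The formal parameter `κ ∈ F`. -/
noncomputable def κ : F := RatFunc.X

/-- Commutator `[a,b] = a*b - b*a` in an associative ring. -/
def br {A : Type*} [Ring A] (a b : A) : A := a * b - b * a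

/-- Generators of `SH⁺` : `D0 n` stands for `D⁰_{n+1}` (`l = n+1 ≥ 1`),
`D1 k` stands for `D¹_k` (`k ≥ 0`). -/
inductive Gen : Type
  | D0 : ℕ → Gen
  | D1 : ℕ → Gen

/-- `D⁰_{n+1}` as an element of the free algebra. -/
noncomputable def g0 (n : ℕ) : FreeAlgebra F Gen := FreeAlgebra.ι F (Gen.D0 n)

/-- `D¹_k` as an element of the free algebra. -/
noncomputable def g1 (k : ℕ) : FreeAlgebra F Gen := FreeAlgebra.ι F (Gen.D1 k)

/-- Defining relations of `SH⁺`.  Recall `g0 n = D⁰_{n+1}`, so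
`mix l k` says `[D⁰_{l+1}, D¹_k] = D¹_{(l+1)+k-1}`. -/
inductive SHRel : FreeAlgebra F Gen → FreeAlgebra F Gen → Prop
  | comm0 (l k : ℕ) : SHRel (br (g0 l) (g0 k)) 0
  | mix (l k : ℕ) : SHRel (br (g0 l) (g1 k)) (g1 (l + k))
  | quad : SHRel (3 * br (g1 2) (g1 1) - br (g1 3) (g1 0) + br (g1 1) (g1 0)
      + (κ * (κ - 1)) • (g1 0 * g1 0 + br (g1 1) (g1 0))) 0
  | cubic : SHRel (br (g1 0) (br (g1 0) (g1 1))) 0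

/-- The algebra `SH⁺`, presented by generators and relations. -/
abbrev SHp : Type := RingQuot SHRel

/-- `D⁰_l ∈ SH⁺` (meaningful for `l ≥ 1`). -/
noncomputable def D0 (l : ℕ) : SHp := RingQuot.mkAlgHom F SHRel (g0 (l - 1))

/-- `D¹_k ∈ SH⁺`. -/
noncomputable def D1 (k : ℕ) : SHp := RingQuot.mkAlgHom F SHRel (g1 k)

/-- Evaluation sending `D0 n ↦ X n`, `D1 k ↦ 0`. -/
noncomputable def ψfree : FreeAlgebra F Gen →ₐ[F] MvPolynomial ℕ F :=
  FreeAlgebra.lift F (fun g => match g with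
    | Gen.D0 n => MvPolynomial.X n
    | Gen.D1 _ => 0)

lemma ψfree_g0 (n : ℕ) : ψfree (g0 n) = MvPolynomial.X n := by
  simp [ψfree, g0]

lemma ψfree_g1 (k : ℕ) : ψfree (g1 k) = 0 := by
  simp [ψfree, g1]

lemma ψfree_rel : ∀ ⦃x y : FreeAlgebra F Gen⦄, SHRel x y → ψfree x = ψfree y := by
  intro x y h
  cases h with
  | comm0 l k => simp [br, ψfree_g0, mul_comm]
  | mix l k => simp [br, ψfree_g0, ψfree_g1]
  | quad => simp [br, ψfree_g1]
  | cubic => simp [br, ψfree_g1]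

/-- The induced retraction `SH⁺ → F[T]`. -/
noncomputable def ψ : SHp →ₐ[F] MvPolynomial ℕ F :=
  RingQuot.liftAlgHom F ⟨ψfree, ψfree_rel⟩

lemma ψ_D0 (n : ℕ) : ψ (D0 (n + 1)) = MvPolynomial.X n := by
  have : ψ (RingQuot.mkAlgHom F SHRel (g0 n)) = ψfree (g0 n) :=
    RingQuot.liftAlgHom_mkAlgHom_apply F ψfree ψfree_rel (g0 n)
  simpa [D0, ψfree_g0] using this

/-- The elements `D⁰_1, D⁰_2, …` are algebraically independent in `SH⁺`: the
`F`-algebra homomorphism `F[T_1, T_2, …] → SH⁺` sending `T_l ↦ D⁰_l` exists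
(here the variable indexed by `n : ℕ` is `T_{n+1}`), and it is injective. -/
theorem statement1 :
    (∃ φ : MvPolynomial ℕ F →ₐ[F] SHp, ∀ n : ℕ, φ (MvPolynomial.X n) = D0 (n + 1)) ∧
    (∀ φ : MvPolynomial ℕ F →ₐ[F] SHp,
      (∀ n : ℕ, φ (MvPolynomial.X n) = D0 (n + 1)) → Function.Injective φ) := by
  have hcomm : ∀ a ∈ Set.range (fun n => D0 (n + 1)), ∀ b ∈ Set.range (fun n => D0 (n + 1)),
      a * b = b * a := by
    rintro a ⟨l, rfl⟩ b ⟨k, rfl⟩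
    have h := RingQuot.mkAlgHom_rel F (SHRel.comm0 l k)
    simp only [map_sub, map_mul, map_zero, br] at h
    have : D0 (l + 1) * D0 (k + 1) - D0 (k + 1) * D0 (l + 1) = 0 := by
      simpa [D0, map_sub, map_mul, br] using h
    exact sub_eq_zero.mp this
  constructor
  · letI : CommRing (Algebra.adjoin F (Set.range (fun n => D0 (n + 1)))) :=
      Algebra.adjoinCommRingOfComm F hcomm
    refine ⟨((Algebra.adjoin F (Set.range (fun n => D0 (n + 1)))).val).comp
      (MvPolynomial.aeval (fun n =>
        (⟨D0 (n + 1), Algebra.subset_adjoin ⟨n, rfl⟩⟩ :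
          Algebra.adjoin F (Set.range (fun n => D0 (n + 1)))))), fun n => by simp⟩
  · intro φ hφ
    have key : ∀ p, ψ (φ p) = p := by
      have : ψ.comp φ = AlgHom.id F (MvPolynomial ℕ F) := by
        apply MvPolynomial.algHom_ext
        intro n
        simp [hφ n, ψ_D0]
      intro p
      exact AlgHom.congr_fun this p
    intro a b h
    rw [← key a, ← key b, h]
end
end

section
/- Let SH^> be the F-subalgebra of SH⁺ generated by {D¹_k : k ≥ 0} and SH⁰ the F-subalgebra generated by {D⁰_l : l ≥ 1}. Then SH⁺ is spanned as an F-vector space by the products a·b with a ∈ SH^> and b ∈ SH⁰; equivalently, the multiplication map SH^> ⊗_F SH⁰ → SH⁺ is surjective. -/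
noncomputable section

/-- `SH^>`, the subalgebra generated by the `D¹_k`, `k ≥ 0`. -/
noncomputable def SHgt : Subalgebra F SHp := Algebra.adjoin F (Set.range D1)

/-- `SH⁰`, the subalgebra generated by the `D⁰_l`, `l ≥ 1`. -/
noncomputable def SHzero : Subalgebra F SHp :=
  Algebra.adjoin F (Set.range fun n : ℕ => D0 (n + 1))

/-- The spanning set. -/
noncomputable def Mset : Set SHp := {x : SHp | ∃ a ∈ SHgt, ∃ b ∈ SHzero, x = a * b}

noncomputable def Mspan : Submodule F SHp := Submodule.span F Mset

lemma mem_Mspan {a b : SHp} (ha : a ∈ SHgt) (hb : b ∈ SHzero) : a * b ∈ Mspan :=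
  Submodule.subset_span ⟨a, ha, b, hb, rfl⟩

lemma gt_mem_Mspan {a : SHp} (ha : a ∈ SHgt) : a ∈ Mspan := by
  simpa using mem_Mspan ha (one_mem _)

lemma mk_br (x y : FreeAlgebra F Gen) :
    RingQuot.mkAlgHom F SHRel (br x y) =
      br (RingQuot.mkAlgHom F SHRel x) (RingQuot.mkAlgHom F SHRel y) := by
  simp [br, map_mul, map_sub]

/-- `[D⁰_{n+1}, D¹_k] = D¹_{n+k}`. -/
lemma br_D0_D1 (n k : ℕ) : br (D0 (n + 1)) (D1 k) = D1 (n + k) := by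
  have h := RingQuot.mkAlgHom_rel F (SHRel.mix n k)
  simpa [D0, D1, mk_br] using h

lemma br_mul {A : Type*} [Ring A] (c a b : A) :
    br c (a * b) = br c a * b + a * br c b := by
  simp only [br]; noncomm_ring

/-- `ad (D⁰_{n+1})` preserves `SH^>`. -/
lemma br_D0_mem_SHgt (n : ℕ) {a : SHp} (ha : a ∈ SHgt) :
    br (D0 (n + 1)) a ∈ SHgt := by
  induction ha using Algebra.adjoin_induction with
  | mem x hx =>
      obtain ⟨k, rfl⟩ := hx
      rw [br_D0_D1]
      exact Algebra.subset_adjoin ⟨n + k, rfl⟩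
  | algebraMap r =>
      have : br (D0 (n + 1)) ((algebraMap F SHp) r) = 0 := by
        simp [br, Algebra.commutes]
      rw [this]; exact zero_mem _
  | add x y hx hy px py =>
      have : br (D0 (n + 1)) (x + y) = br (D0 (n + 1)) x + br (D0 (n + 1)) y := by
        simp only [br]; noncomm_ring
      rw [this]; exact add_mem px py
  | mul x y hx hy px py =>
      rw [br_mul]
      exact add_mem (mul_mem px hy) (mul_mem hx py)

/-- `Mspan` is stable under left multiplication by `SH^>`. -/
lemma gt_mul_Mspan {a m : SHp} (ha : a ∈ SHgt) (hm : m ∈ Mspan) :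
    a * m ∈ Mspan := by
  induction hm using Submodule.span_induction with
  | mem x hx =>
      obtain ⟨a', ha', b', hb', rfl⟩ := hx
      rw [← mul_assoc]
      exact mem_Mspan (mul_mem ha ha') hb'
  | zero => simpa using zero_mem Mspan
  | add x y hx hy px py => rw [mul_add]; exact add_mem px py
  | smul r x hx px => rw [mul_smul_comm]; exact Submodule.smul_mem _ _ px

/-- `Mspan` is stable under right multiplication by `SH⁰`. -/
lemma Mspan_mul_zero {b m : SHp} (hb : b ∈ SHzero) (hm : m ∈ Mspan) :
    m * b ∈ Mspan := by
  induction hm using Submodule.span_induction with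
  | mem x hx =>
      obtain ⟨a', ha', b', hb', rfl⟩ := hx
      rw [mul_assoc]
      exact mem_Mspan ha' (mul_mem hb' hb)
  | zero => simpa using zero_mem Mspan
  | add x y hx hy px py => rw [add_mul]; exact add_mem px py
  | smul r x hx px => rw [smul_mul_assoc]; exact Submodule.smul_mem _ _ px

/-- `Mspan` is stable under left multiplication by `SH⁰`. -/
lemma zero_mul_Mspan {b m : SHp} (hb : b ∈ SHzero) (hm : m ∈ Mspan) :
    b * m ∈ Mspan := by
  induction hb using Algebra.adjoin_induction generalizing m with
  | mem x hx =>
      obtain ⟨n, rfl⟩ := hx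
      induction hm using Submodule.span_induction with
      | mem x hx =>
          obtain ⟨a', ha', b', hb', rfl⟩ := hx
          have key : D0 (n + 1) * a' = a' * D0 (n + 1) + br (D0 (n + 1)) a' := by
            simp [br]
          rw [← mul_assoc, key, add_mul, mul_assoc]
          have hD0 : D0 (n + 1) ∈ SHzero := Algebra.subset_adjoin ⟨n, rfl⟩
          exact add_mem (mem_Mspan ha' (mul_mem hD0 hb'))
            (mem_Mspan (br_D0_mem_SHgt n ha') hb')
      | zero => simpa using zero_mem Mspan
      | add x y hx hy px py => rw [mul_add]; exact add_mem px py
      | smul r x hx px => rw [mul_smul_comm]; exact Submodule.smul_mem _ _ px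
  | algebraMap r =>
      rw [Algebra.algebraMap_eq_smul_one, smul_mul_assoc, one_mul]
      exact Submodule.smul_mem _ _ hm
  | add x y hx hy px py =>
      rw [add_mul]; exact add_mem (px hm) (py hm)
  | mul x y hx hy px py =>
      rw [mul_assoc]; exact px (py hm)

/-- `Mspan` is closed under multiplication. -/
lemma Mspan_mul {m m' : SHp} (hm : m ∈ Mspan) (hm' : m' ∈ Mspan) :
    m * m' ∈ Mspan := by
  induction hm using Submodule.span_induction with
  | mem x hx =>
      obtain ⟨a', ha', b', hb', rfl⟩ := hx
      rw [mul_assoc]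
      exact gt_mul_Mspan ha' (zero_mul_Mspan hb' hm')
  | zero => simpa using zero_mem Mspan
  | add x y hx hy px py => rw [add_mul]; exact add_mem px py
  | smul r x hx px => rw [smul_mul_assoc]; exact Submodule.smul_mem _ _ px

/-- `SH⁺` is spanned over `F` by the products `a·b` with `a ∈ SH^>`, `b ∈ SH⁰`. -/
theorem statement2 :
    Submodule.span F {x : SHp | ∃ a ∈ SHgt, ∃ b ∈ SHzero, x = a * b} = ⊤ := by
  rw [Submodule.eq_top_iff']
  intro x
  obtain ⟨y, rfl⟩ := RingQuot.mkAlgHom_surjective F SHRel x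
  show RingQuot.mkAlgHom F SHRel y ∈ Mspan
  induction y using FreeAlgebra.induction with
  | grade0 r =>
      rw [AlgHom.commutes]
      rw [Algebra.algebraMap_eq_smul_one]
      exact Submodule.smul_mem _ _ (gt_mem_Mspan (one_mem _))
  | grade1 g =>
      cases g with
      | D0 n =>
          have : RingQuot.mkAlgHom F SHRel (FreeAlgebra.ι F (Gen.D0 n)) = D0 (n + 1) := by
            simp [D0, g0]
          rw [this]
          have hD0 : D0 (n + 1) ∈ SHzero := Algebra.subset_adjoin ⟨n, rfl⟩
          simpa using mem_Mspan (one_mem SHgt) hD0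
      | D1 k =>
          exact gt_mem_Mspan (Algebra.subset_adjoin ⟨k, rfl⟩)
  | mul x y px py =>
      rw [map_mul]; exact Mspan_mul px py
  | add x y px py =>
      rw [map_add]; exact add_mem px py
end
end

section
/- Let SH^> be the F-subalgebra of SH⁺ generated by {D¹_k : k ≥ 0} and SH⁰ the F-subalgebra generated by {D⁰_l : l ≥ 1}. Then the F-linear map SH^> ⊗_F SH⁰ → SH⁺ induced by multiplication (a ⊗ b ↦ a·b) is a linear isomorphism. -/
noncomputable section

open scoped TensorProduct

/-- The multiplication map `SH^> ⊗_F SH⁰ → SH⁺`, `a ⊗ b ↦ a·b`. -/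
noncomputable def mulMap : (SHgt ⊗[F] SHzero) →ₗ[F] SHp :=
  (LinearMap.mul' F SHp).comp
    (TensorProduct.map (Subalgebra.val SHgt).toLinearMap (Subalgebra.val SHzero).toLinearMap)

/-!
`SH⁰` is modelled by `P = F[X₁, X₂, …]` and `SH^>` by `V`, the free algebra on `t₀, t₁, …`
modulo `quad`, `cubic` and all their images under the derivations `δₙ : tₖ ↦ t_{n+k}`; closing
the relations under `δₙ` is what lets `δₙ` descend to `V`. `SH⁺` acts on `W = V ⊗ P`: `D¹_k` by
left multiplication by `tₖ` on `V` and `D⁰_{n+1}` by `δₙ ⊗ 1 + 1 ⊗ Xₙ`. The relation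
`[D⁰_l, D¹_k] = D¹_{l+k-1}` holds because `δₙ` is a derivation, and `quad`, `cubic` hold in `V`
by construction. The map `pbw : v ⊗ f ↦ v · f` from `W` to `SH⁺` is then a map of `SH⁺`-modules,
hence inverse to the orbit map `z ↦ z · (1 ⊗ 1)`. As `pbw` is the multiplication map precomposed
with the surjection `V ⊗ P → SH^> ⊗ SH⁰`, the multiplication map is bijective.
-/

open TrivSqZeroExt

section Commutator

variable {A : Type*} [Ring A]

lemma br_mul_right (d x y : A) : br d (x * y) = x * br d y + br d x * y := by
  simp only [br, mul_sub, sub_mul, ← mul_assoc]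
  abel

lemma br_add_right (d x y : A) : br d (x + y) = br d x + br d y := by
  simp only [br, mul_add, add_mul]
  abel

end Commutator

section Leibniz

variable {R A B : Type*} [CommRing R] [Ring A] [Algebra R A] [Ring B] [Algebra R B]

lemma LinearMap.map_one_of_leibniz {π : A →ₐ[R] B} {d : A →ₗ[R] B}
    (hd : ∀ x y, d (x * y) = π x * d y + d x * π y) : d 1 = 0 := by
  simpa using hd 1 1

lemma LinearMap.commutator_lmul_of_leibniz {D : A →ₗ[R] A}
    (hD : ∀ x y, D (x * y) = x * D y + D x * y) (u : A) :
    D * Algebra.lmul R A u - Algebra.lmul R A u * D = Algebra.lmul R A (D u) := by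
  ext x
  simp [hD]

def TrivSqZeroExt.algHomOfLeibniz (π : A →ₐ[R] B) (d : A →ₗ[R] B)
    (hd : ∀ x y, d (x * y) = π x * d y + d x * π y) : A →ₐ[R] TrivSqZeroExt B B where
  toFun x := inl (π x) + inr (d x)
  map_one' := by simp [LinearMap.map_one_of_leibniz hd]
  map_mul' x y := by
    ext
    · simp
    · simp [hd]
  map_zero' := by simp
  map_add' x y := by
    ext <;> simp [add_comm]
  commutes' r := by
    ext <;> simp [Algebra.algebraMap_eq_smul_one, LinearMap.map_one_of_leibniz hd]

end Leibniz

lemma Module.End.commute_rTensorAlgHom_lTensorAlgHom {R M N : Type*} [CommSemiring R]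
    [AddCommMonoid M] [Module R M] [AddCommMonoid N] [Module R N]
    (f : Module.End R M) (g : Module.End R N) :
    Commute (rTensorAlgHom R M N f) (lTensorAlgHom R N M g) :=
  (LinearMap.rTensor_comp_lTensor (f := f) (g := g)).trans
    (LinearMap.lTensor_comp_rTensor (f := f) (g := g)).symm

namespace FreeAlgebra

variable {R X : Type*} [CommRing R]

/-- `x ↦ x + D x ε` for the derivation `D` extending `f`; defining `D` through this algebra map
gives the Leibniz rule for free. -/
def liftDerivAlgHom (f : X → FreeAlgebra R X) :
    FreeAlgebra R X →ₐ[R] TrivSqZeroExt (FreeAlgebra R X) (FreeAlgebra R X) :=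
  lift R fun x => inl (ι R x) + inr (f x)

lemma fst_liftDerivAlgHom (f : X → FreeAlgebra R X) (a : FreeAlgebra R X) :
    (liftDerivAlgHom f a).fst = a := by
  induction a using FreeAlgebra.induction with
  | grade0 r => simp [TrivSqZeroExt.algebraMap_eq_inl']
  | grade1 x => simp [liftDerivAlgHom]
  | mul a b ha hb => simp [ha, hb]
  | add a b ha hb => simp [ha, hb]

def liftDeriv (f : X → FreeAlgebra R X) : FreeAlgebra R X →ₗ[R] FreeAlgebra R X where
  toFun a := (liftDerivAlgHom f a).snd
  map_add' a b := by simp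
  map_smul' c a := by simp

lemma liftDeriv_ι (f : X → FreeAlgebra R X) (x : X) : liftDeriv f (ι R x) = f x := by
  simp [liftDeriv, liftDerivAlgHom]

lemma liftDeriv_mul (f : X → FreeAlgebra R X) (a b : FreeAlgebra R X) :
    liftDeriv f (a * b) = a * liftDeriv f b + liftDeriv f a * b := by
  change (liftDerivAlgHom f (a * b)).snd = _
  rw [map_mul, snd_mul, fst_liftDerivAlgHom, fst_liftDerivAlgHom]
  rfl

lemma liftDeriv_algebraMap (f : X → FreeAlgebra R X) (r : R) :
    liftDeriv f (algebraMap R _ r) = 0 := by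
  simp [liftDeriv, TrivSqZeroExt.algebraMap_eq_inl']

lemma liftDeriv_comm {f g : X → FreeAlgebra R X}
    (h : ∀ x, liftDeriv f (g x) = liftDeriv g (f x)) (a : FreeAlgebra R X) :
    liftDeriv f (liftDeriv g a) = liftDeriv g (liftDeriv f a) := by
  induction a using FreeAlgebra.induction with
  | grade0 r => simp [liftDeriv_algebraMap]
  | grade1 x => simp [liftDeriv_ι, h]
  | mul a b ha hb =>
    simp only [liftDeriv_mul, map_add, ha, hb]
    abel
  | add a b ha hb => simp [ha, hb]

lemma lift_liftDeriv {B : Type*} [Ring B] [Algebra R B] (φ : X → B) (f : X → FreeAlgebra R X)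
    (d : B) (h : ∀ x, lift R φ (f x) = br d (φ x)) (a : FreeAlgebra R X) :
    lift R φ (liftDeriv f a) = br d (lift R φ a) := by
  induction a using FreeAlgebra.induction with
  | grade0 r => simp [liftDeriv_algebraMap, br, Algebra.commutes]
  | grade1 x => simp [liftDeriv_ι, h]
  | mul a b ha hb => simp [liftDeriv_mul, ha, hb, br_mul_right]
  | add a b ha hb => simp [ha, hb, br_add_right]

end FreeAlgebra

namespace RingQuot

variable {R A : Type*} [CommRing R] [Ring A] [Algebra R A] {r : A → A → Prop}

def liftLeibnizAlgHom (D : A →ₗ[R] A) (hD : ∀ x y, D (x * y) = x * D y + D x * y)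
    (hr : ∀ ⦃a b⦄, r a b → r (D a) (D b)) :
    RingQuot r →ₐ[R] TrivSqZeroExt (RingQuot r) (RingQuot r) :=
  liftAlgHom R ⟨TrivSqZeroExt.algHomOfLeibniz (mkAlgHom R r) ((mkAlgHom R r).toLinearMap ∘ₗ D)
    (by simp [hD]), fun a b hab => by
      simp [TrivSqZeroExt.algHomOfLeibniz, mkAlgHom_rel R hab, mkAlgHom_rel R (hr hab)]⟩

def liftLeibniz (D : A →ₗ[R] A) (hD : ∀ x y, D (x * y) = x * D y + D x * y)
    (hr : ∀ ⦃a b⦄, r a b → r (D a) (D b)) : RingQuot r →ₗ[R] RingQuot r where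
  toFun x := (liftLeibnizAlgHom D hD hr x).snd
  map_add' x y := by simp
  map_smul' c x := by simp

variable {D : A →ₗ[R] A} (hD : ∀ x y, D (x * y) = x * D y + D x * y)
  (hr : ∀ ⦃a b⦄, r a b → r (D a) (D b))

lemma liftLeibniz_mkAlgHom (a : A) : liftLeibniz D hD hr (mkAlgHom R r a) = mkAlgHom R r (D a) := by
  simp [liftLeibniz, liftLeibnizAlgHom, TrivSqZeroExt.algHomOfLeibniz]

lemma liftLeibniz_mul (x y : RingQuot r) :
    liftLeibniz D hD hr (x * y) = x * liftLeibniz D hD hr y + liftLeibniz D hD hr x * y := by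
  obtain ⟨a, rfl⟩ := mkAlgHom_surjective R r x
  obtain ⟨b, rfl⟩ := mkAlgHom_surjective R r y
  simp only [← map_mul, liftLeibniz_mkAlgHom, hD, map_add]

end RingQuot

open TensorProduct LinearMap Module.End

namespace SHp

abbrev FA : Type := FreeAlgebra F ℕ

def t (k : ℕ) : FA := FreeAlgebra.ι F k

def δ (n : ℕ) : FA →ₗ[F] FA := FreeAlgebra.liftDeriv fun k => t (n + k)

lemma δ_t (n k : ℕ) : δ n (t k) = t (n + k) := FreeAlgebra.liftDeriv_ι _ k

lemma δ_comm (n m : ℕ) (a : FA) : δ n (δ m a) = δ m (δ n a) :=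
  FreeAlgebra.liftDeriv_comm (fun k => by
    change δ n (t (m + k)) = δ m (t (n + k))
    rw [δ_t, δ_t, Nat.add_left_comm]) a

def quadFA : FA := 3 * br (t 2) (t 1) - br (t 3) (t 0) + br (t 1) (t 0)
  + (κ * (κ - 1)) • (t 0 * t 0 + br (t 1) (t 0))

def cubicFA : FA := br (t 0) (br (t 0) (t 1))

inductive RelGt : FA → FA → Prop
  | quad : RelGt quadFA 0
  | cubic : RelGt cubicFA 0
  | δ (n : ℕ) {a b : FA} : RelGt a b → RelGt (δ n a) (δ n b)

abbrev V : Type := RingQuot RelGt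

abbrev mkV : FA →ₐ[F] V := RingQuot.mkAlgHom F RelGt

/-- Instance search does not find this through `RingQuot` when it is needed for `V ⊗[F] P`. -/
instance : AddCommGroup V := Ring.toAddCommGroup

def δV (n : ℕ) : V →ₗ[F] V :=
  RingQuot.liftLeibniz (δ n) (FreeAlgebra.liftDeriv_mul _) (fun _ _ => RelGt.δ n)

lemma δV_mkV (n : ℕ) (a : FA) : δV n (mkV a) = mkV (δ n a) :=
  RingQuot.liftLeibniz_mkAlgHom _ _ a

lemma δV_mul (n : ℕ) (x y : V) : δV n (x * y) = x * δV n y + δV n x * y :=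
  RingQuot.liftLeibniz_mul _ _ x y

lemma δV_one (n : ℕ) : δV n 1 = 0 := map_one_of_leibniz (π := AlgHom.id F V) (δV_mul n)

lemma δV_comm (n m : ℕ) : Commute (δV n) (δV m) := by
  ext x
  obtain ⟨a, rfl⟩ := RingQuot.mkAlgHom_surjective F RelGt x
  simp [δV_mkV, δ_comm]

lemma D0_succ (n : ℕ) : D0 (n + 1) = RingQuot.mkAlgHom F SHRel (g0 n) := rfl

lemma br_D0_D1 (n k : ℕ) : br (D0 (n + 1)) (D1 k) = D1 (n + k) := by
  simpa [br, D0_succ, D1] using RingQuot.mkAlgHom_rel F (SHRel.mix n k)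

lemma lift_D1_δ (n : ℕ) (a : FA) :
    FreeAlgebra.lift F D1 (δ n a) = br (D0 (n + 1)) (FreeAlgebra.lift F D1 a) :=
  FreeAlgebra.lift_liftDeriv D1 _ _ (fun k => by simp [t, br_D0_D1]) a

lemma lift_D1_rel ⦃a b : FA⦄ (h : RelGt a b) :
    FreeAlgebra.lift F D1 a = FreeAlgebra.lift F D1 b := by
  induction h with
  | quad =>
    simpa [quadFA, br, t, D1, map_ofNat] using RingQuot.mkAlgHom_rel F SHRel.quad
  | cubic =>
    simpa [cubicFA, br, t, D1] using RingQuot.mkAlgHom_rel F SHRel.cubic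
  | δ n _ ih => rw [lift_D1_δ, lift_D1_δ, ih]

def ofV : V →ₐ[F] SHp := RingQuot.liftAlgHom F ⟨FreeAlgebra.lift F D1, lift_D1_rel⟩

lemma ofV_mkV (a : FA) : ofV (mkV a) = FreeAlgebra.lift F D1 a :=
  RingQuot.liftAlgHom_mkAlgHom_apply _ _ _ _

lemma ofV_δV (n : ℕ) (v : V) : ofV (δV n v) = br (D0 (n + 1)) (ofV v) := by
  obtain ⟨a, rfl⟩ := RingQuot.mkAlgHom_surjective F RelGt v
  rw [δV_mkV, ofV_mkV, ofV_mkV, lift_D1_δ]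

lemma range_ofV : ofV.range = SHgt := by
  have : FreeAlgebra.lift F D1 = ofV.comp mkV := by ext; simp [ofV_mkV]
  rw [SHgt, Algebra.adjoin_range_eq_range_freeAlgebra_lift, this, AlgHom.range_comp,
    (AlgHom.range_eq_top _).mpr (RingQuot.mkAlgHom_surjective F RelGt), Algebra.map_top]

abbrev P : Type := MvPolynomial ℕ F

lemma D0_mul_D0_comm (l k : ℕ) : D0 (l + 1) * D0 (k + 1) = D0 (k + 1) * D0 (l + 1) := by
  simpa [br, D0_succ, sub_eq_zero] using RingQuot.mkAlgHom_rel F (SHRel.comm0 l k)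

lemma D0_mem_SHzero (n : ℕ) : D0 (n + 1) ∈ SHzero := Algebra.subset_adjoin ⟨n, rfl⟩

instance : IsMulCommutative SHzero := Algebra.isMulCommutative_adjoin F (by
  rintro _ ⟨l, rfl⟩ _ ⟨k, rfl⟩
  exact D0_mul_D0_comm l k)

open scoped IsMulCommutative in
def ofP : P →ₐ[F] SHzero := MvPolynomial.aeval fun n => ⟨D0 (n + 1), D0_mem_SHzero n⟩

lemma ofP_X (n : ℕ) : (ofP (MvPolynomial.X n) : SHp) = D0 (n + 1) := by
  simp [ofP]

lemma ofP_C (r : F) : (ofP (MvPolynomial.C r) : SHp) = algebraMap F SHp r := by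
  simp [ofP]

lemma ofP_surjective : Function.Surjective ofP := by
  rintro ⟨b, hb⟩
  suffices ∃ f, (ofP f : SHp) = b from this.imp fun f hf => Subtype.ext hf
  induction hb using Algebra.adjoin_induction with
  | mem x hx =>
    obtain ⟨n, rfl⟩ := hx
    exact ⟨MvPolynomial.X n, ofP_X n⟩
  | algebraMap r => exact ⟨MvPolynomial.C r, ofP_C r⟩
  | add x y _ _ hx hy =>
    obtain ⟨f, rfl⟩ := hx
    obtain ⟨g, rfl⟩ := hy
    exact ⟨f + g, by simp⟩
  | mul x y _ _ hx hy =>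
    obtain ⟨f, rfl⟩ := hx
    obtain ⟨g, rfl⟩ := hy
    exact ⟨f * g, by simp⟩

abbrev W : Type := V ⊗[F] P

def mulV : V →ₐ[F] Module.End F W := (rTensorAlgHom F V P).comp (Algebra.lmul F V)

def opD0 (n : ℕ) : Module.End F W :=
  rTensorAlgHom F V P (δV n) + lTensorAlgHom F P V (Algebra.lmul F P (MvPolynomial.X n))

lemma opD0_commute (l k : ℕ) : Commute (opD0 l) (opD0 k) := by
  have hδ := (δV_comm l k).map (rTensorAlgHom F V P)
  have hX := ((Commute.all (MvPolynomial.X l : P) (MvPolynomial.X k)).map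
    (Algebra.lmul F P)).map (lTensorAlgHom F P V)
  exact (hδ.add_right (commute_rTensorAlgHom_lTensorAlgHom _ _)).add_left
    ((commute_rTensorAlgHom_lTensorAlgHom _ _).symm.add_right hX)

lemma br_opD0_mulV (n : ℕ) (v : V) : br (opD0 n) (mulV v) = mulV (δV n v) := by
  have h := congrArg (rTensorAlgHom F V P) (commutator_lmul_of_leibniz (δV_mul n) v)
  rw [map_sub, map_mul, map_mul] at h
  have hc := commute_rTensorAlgHom_lTensorAlgHom (Algebra.lmul F V v)
    (Algebra.lmul F P (MvPolynomial.X n))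
  simp only [br, opD0, mulV, AlgHom.comp_apply, add_mul, mul_add, ← h, hc.eq]
  abel

def freeAction : FreeAlgebra F Gen →ₐ[F] Module.End F W :=
  FreeAlgebra.lift F fun
    | .D0 n => opD0 n
    | .D1 k => mulV (mkV (t k))

lemma freeAction_g0 (n : ℕ) : freeAction (g0 n) = opD0 n := by simp [freeAction, g0]

lemma freeAction_g1 (k : ℕ) : freeAction (g1 k) = mulV (mkV (t k)) := by simp [freeAction, g1]

lemma freeAction_rel ⦃x y : FreeAlgebra F Gen⦄ (h : SHRel x y) : freeAction x = freeAction y := by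
  cases h with
  | comm0 l k => simpa [br, freeAction_g0, sub_eq_zero] using (opD0_commute l k).eq
  | mix l k =>
    simpa [br, freeAction_g0, freeAction_g1, δV_mkV, δ_t] using br_opD0_mulV l (mkV (t k))
  | quad =>
    have : mkV quadFA = 0 := (RingQuot.mkAlgHom_rel F RelGt.quad).trans (map_zero _)
    simpa [quadFA, br, freeAction_g1, map_ofNat] using congrArg mulV this
  | cubic =>
    have : mkV cubicFA = 0 := (RingQuot.mkAlgHom_rel F RelGt.cubic).trans (map_zero _)
    simpa [cubicFA, br, freeAction_g1] using congrArg mulV this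

def action : SHp →ₐ[F] Module.End F W :=
  RingQuot.liftAlgHom F ⟨freeAction, freeAction_rel⟩

lemma action_D0 (n : ℕ) : action (D0 (n + 1)) = opD0 n := by
  rw [D0_succ, action, RingQuot.liftAlgHom_mkAlgHom_apply, freeAction_g0]

lemma action_D1 (k : ℕ) : action (D1 k) = mulV (mkV (t k)) := by
  rw [D1, action, RingQuot.liftAlgHom_mkAlgHom_apply, freeAction_g1]

lemma action_ofV (v : V) : action (ofV v) = mulV v := by
  suffices action.comp ofV = mulV from AlgHom.congr_fun this v
  ext k
  simp [ofV_mkV, action_D1, t]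

def ofVGt : V →ₐ[F] SHgt :=
  ofV.codRestrict SHgt fun v => range_ofV ▸ ofV.mem_range_self v

lemma ofVGt_surjective : Function.Surjective ofVGt := by
  rintro ⟨a, ha⟩
  rw [← range_ofV] at ha
  obtain ⟨v, rfl⟩ := ha
  exact ⟨v, rfl⟩

def pbw : W →ₗ[F] SHp := mulMap ∘ₗ map ofVGt.toLinearMap ofP.toLinearMap

lemma pbw_tmul (v : V) (f : P) : pbw (v ⊗ₜ f) = ofV v * ofP f := by
  simp [pbw, mulMap, ofVGt]

def orbit : SHp →ₗ[F] W := applyₗ (1 ⊗ₜ 1 : W) ∘ₗ action.toLinearMap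

lemma mulV_tmul (v u : V) (f : P) : mulV v (u ⊗ₜ f) = (v * u) ⊗ₜ f := rfl

lemma opD0_tmul (n : ℕ) (u : V) (f : P) :
    opD0 n (u ⊗ₜ f) = δV n u ⊗ₜ f + u ⊗ₜ (MvPolynomial.X n * f) := rfl

lemma pbw_mulV (v : V) (w : W) : pbw (mulV v w) = ofV v * pbw w := by
  induction w using TensorProduct.induction_on with
  | zero => simp
  | tmul u f => rw [mulV_tmul, pbw_tmul, pbw_tmul, map_mul, mul_assoc]
  | add w w' hw hw' => simp [hw, hw', mul_add]

lemma pbw_opD0 (n : ℕ) (w : W) : pbw (opD0 n w) = D0 (n + 1) * pbw w := by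
  induction w using TensorProduct.induction_on with
  | zero => simp
  | tmul u f =>
    have : D0 (n + 1) * ofV u = ofV u * D0 (n + 1) + ofV (δV n u) := by
      rw [ofV_δV, br]; abel
    rw [opD0_tmul, map_add, pbw_tmul, pbw_tmul, pbw_tmul, map_mul, Subalgebra.coe_mul, ofP_X,
      ← mul_assoc, ← mul_assoc, this, add_mul, add_comm]
  | add w w' hw hw' => simp [hw, hw', mul_add]

lemma pbw_action (z : SHp) (w : W) : pbw (action z w) = z * pbw w := by
  obtain ⟨x, rfl⟩ := RingQuot.mkAlgHom_surjective F SHRel z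
  induction x using FreeAlgebra.induction generalizing w with
  | grade0 r => simp [Algebra.smul_def]
  | grade1 g =>
    cases g with
    | D0 n =>
      change pbw (action (D0 (n + 1)) w) = D0 (n + 1) * pbw w
      rw [action_D0, pbw_opD0]
    | D1 k =>
      change pbw (action (D1 k) w) = D1 k * pbw w
      rw [action_D1, pbw_mulV, ofV_mkV, t, FreeAlgebra.lift_ι_apply]
  | mul a b ha hb => simp [ha, hb, mul_assoc]
  | add a b ha hb => simp [ha, hb, add_mul]

lemma action_ofP_one_tmul (f g : P) : action (ofP f) (1 ⊗ₜ g) = 1 ⊗ₜ (f * g) := by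
  induction f using MvPolynomial.induction_on generalizing g with
  | C r => simp [MvPolynomial.C_mul', tmul_smul]
  | add f f' hf hf' => simp [hf, hf', add_mul, tmul_add]
  | mul_X f n hf =>
    rw [map_mul, Subalgebra.coe_mul, ofP_X, map_mul, Module.End.mul_apply, action_D0, opD0_tmul,
      δV_one, zero_tmul, zero_add, hf]
    ring_nf

lemma orbit_pbw (w : W) : orbit (pbw w) = w := by
  induction w using TensorProduct.induction_on with
  | zero => simp
  | tmul v f =>
    simp only [orbit, pbw_tmul, coe_comp, Function.comp_apply, applyₗ_apply_apply,
      AlgHom.toLinearMap_apply, map_mul, Module.End.mul_apply, action_ofP_one_tmul, mul_one,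
      action_ofV, mulV_tmul]
  | add w w' hw hw' => rw [map_add, map_add, hw, hw']

lemma pbw_orbit (z : SHp) : pbw (orbit z) = z := by
  have h1 : pbw (1 ⊗ₜ 1) = 1 := by simp [pbw_tmul]
  simp [orbit, pbw_action, h1]

end SHp

/-- The multiplication map `SH^> ⊗_F SH⁰ → SH⁺` is an isomorphism of `F`-vector spaces. -/
theorem statement3 : Function.Bijective mulMap := by
  set T := map SHp.ofVGt.toLinearMap SHp.ofP.toLinearMap
  have hpbw : Function.Bijective (mulMap ∘ T) :=
    Function.bijective_iff_has_inverse.mpr ⟨SHp.orbit, SHp.orbit_pbw, SHp.pbw_orbit⟩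
  have hT : Function.Bijective T :=
    ⟨hpbw.injective.of_comp, map_surjective SHp.ofVGt_surjective SHp.ofP_surjective⟩
  exact (Function.Bijective.of_comp_iff mulMap hT).mp hpbw
end
end

section
/- For P, Q ∈ F[z], let N(P,Q) = h(z₁−z₂)·P(z₁)·Q(z₂) − h(z₂−z₁)·P(z₂)·Q(z₁) ∈ F[z₁,z₂]. For a, b ∈ ℕ set C(a,b) = N(z^a, z^b) − N(z^b, z^a) and S(a,b) = N(z^a, z^b) + N(z^b, z^a). Then for all k, l ≥ 0 the following identity holds in F[z₁,z₂]: 3·C(l+2,k+1) − 3·C(l+1,k+2) − C(l+3,k) + C(l,k+3) + C(l+1,k) − C(l,k+1) + κ(κ−1)·( S(k,l) + C(l+1,k) − C(l,k+1) ) = 0. (This is the quadratic relation of the deformed W_{1+∞}-algebra verified in the shuffle realization, where the shuffle product of z^a and z^b equals N(z^a,z^b)/(z₁−z₂).) -/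
noncomputable section

open MvPolynomial

/-- `h(u) = (u+1-κ)(u-1)(u+κ)`, evaluated in any commutative `F`-algebra. -/
noncomputable def hP {A : Type*} [CommRing A] [Algebra F A] (u : A) : A :=
  (u + 1 - algebraMap F A κ) * (u - 1) * (u + algebraMap F A κ)

/-- `N(P,Q) = h(z₁-z₂)·P(z₁)·Q(z₂) - h(z₂-z₁)·P(z₂)·Q(z₁) ∈ F[z₁,z₂]`. -/
noncomputable def Nsh (P Q : Polynomial F) : MvPolynomial (Fin 2) F :=
  hP (X 0 - X 1) * Polynomial.aeval (X 0 : MvPolynomial (Fin 2) F) P * Polynomial.aeval (X 1) Q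
    - hP (X 1 - X 0) * Polynomial.aeval (X 1 : MvPolynomial (Fin 2) F) P * Polynomial.aeval (X 0) Q

/-- `C(a,b) = N(z^a, z^b) - N(z^b, z^a)`. -/
noncomputable def Csh (a b : ℕ) : MvPolynomial (Fin 2) F :=
  Nsh (Polynomial.X ^ a) (Polynomial.X ^ b) - Nsh (Polynomial.X ^ b) (Polynomial.X ^ a)

/-- `S(a,b) = N(z^a, z^b) + N(z^b, z^a)`. -/
noncomputable def Ssh (a b : ℕ) : MvPolynomial (Fin 2) F :=
  Nsh (Polynomial.X ^ a) (Polynomial.X ^ b) + Nsh (Polynomial.X ^ b) (Polynomial.X ^ a)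

/-- The quadratic relation of the deformed `W_{1+∞}`-algebra, verified in the
shuffle realization. -/
theorem statement7 (k l : ℕ) :
    3 * Csh (l + 2) (k + 1) - 3 * Csh (l + 1) (k + 2) - Csh (l + 3) k + Csh l (k + 3)
        + Csh (l + 1) k - Csh l (k + 1)
      + C (κ * (κ - 1)) * (Ssh k l + Csh (l + 1) k - Csh l (k + 1)) = 0 := by
  simp only [Csh, Ssh, Nsh, hP, map_pow, Polynomial.aeval_X, pow_add,
    MvPolynomial.algebraMap_eq, map_mul, map_sub, map_one]
  ring
end
end

section
/- Let S ∈ F[z₁,z₂] be a polynomial such that h(z₁−z₂)·S(z₁,z₂) is symmetric, i.e. invariant under exchanging z₁ and z₂. Then there exists a symmetric polynomial P ∈ F[z₁,z₂] such that S(z₁,z₂) = h(z₂−z₁)·P(z₁,z₂). -/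
noncomputable section

open MvPolynomial

lemma map_hP {A B : Type*} [CommRing A] [CommRing B] [Algebra F A] [Algebra F B]
    (f : A →ₐ[F] B) (u : A) : f (hP u) = hP (f u) := by
  simp [hP, map_mul, map_sub, map_add, AlgHom.commutes]

instance : CharZero F :=
  charZero_of_injective_algebraMap (RatFunc.algebraMap_injective ℂ)

lemma κ_ne (p : Polynomial ℂ) (h : Polynomial.X ≠ p) : κ ≠ algebraMap (Polynomial ℂ) F p := by
  intro hc
  exact h (RatFunc.algebraMap_injective ℂ (by rw [RatFunc.algebraMap_X]; exact hc))

set_option linter.unnecessarySimpa false in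
lemma κ_ne_one : κ ≠ 1 := by
  simpa using κ_ne 1 (by simpa using Polynomial.X_ne_C (1:ℂ))

set_option linter.unnecessarySimpa false in
lemma κ_ne_zero : κ ≠ 0 := by
  simpa using κ_ne 0 (by simpa using Polynomial.X_ne_C (0:ℂ))

lemma κ_ne_three : κ ≠ 3 := by
  intro h
  refine κ_ne 3 ?_ (h.trans (map_ofNat _ 3).symm)
  intro hc
  exact Polynomial.X_ne_C (3:ℂ) (hc.trans (map_ofNat Polynomial.C 3).symm)

lemma κ_ne_neg_two : κ ≠ -2 := by
  intro h
  refine κ_ne (-2) ?_ (h.trans (by rw [map_neg, map_ofNat]))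
  intro hc
  exact Polynomial.X_ne_C (-2:ℂ) (hc.trans (by rw [map_neg, map_ofNat]))

lemma coprime_hP : IsCoprime (hP (Polynomial.X : Polynomial F))
    (hP (-(Polynomial.X : Polynomial F))) := by
  have e1 : hP (Polynomial.X : Polynomial F)
      = (Polynomial.X - Polynomial.C (κ - 1)) * (Polynomial.X - Polynomial.C 1) *
        (Polynomial.X - Polynomial.C (-κ)) := by
    simp only [hP, Polynomial.algebraMap_eq, map_sub, map_neg, map_one]; ring
  have e2 : hP (-(Polynomial.X : Polynomial F))
      = -((Polynomial.X - Polynomial.C (1 - κ)) * (Polynomial.X - Polynomial.C (-1)) *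
        (Polynomial.X - Polynomial.C κ)) := by
    simp only [hP, Polynomial.algebraMap_eq, map_sub, map_neg, map_one]; ring
  rw [e1, e2]
  have cop : ∀ a b : F, a ≠ b →
      IsCoprime (Polynomial.X - Polynomial.C a : Polynomial F)
        (Polynomial.X - Polynomial.C b) := fun a b hab =>
    Polynomial.isCoprime_X_sub_C_of_isUnit_sub (sub_ne_zero_of_ne hab).isUnit
  have h1 := κ_ne_one
  have h0 := κ_ne_zero
  have c11 : IsCoprime (Polynomial.X - Polynomial.C (κ-1) : Polynomial F)
      ((Polynomial.X - Polynomial.C (1 - κ)) * (Polynomial.X - Polynomial.C (-1)) *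
        (Polynomial.X - Polynomial.C κ)) := by
    refine ((cop _ _ ?_).mul_right (cop _ _ ?_)).mul_right (cop _ _ ?_)
    · intro h; exact h1 (mul_left_cancel₀ (two_ne_zero) (by linear_combination h : (2:F)*κ = 2*1))
    · intro h; exact h0 (by linear_combination h)
    · intro h; norm_num at h
  have c12 : IsCoprime (Polynomial.X - Polynomial.C (1:F))
      ((Polynomial.X - Polynomial.C (1 - κ)) * (Polynomial.X - Polynomial.C (-1)) *
        (Polynomial.X - Polynomial.C κ)) := by
    refine ((cop _ _ ?_).mul_right (cop _ _ ?_)).mul_right (cop _ _ ?_)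
    · intro h; exact h0 (by linear_combination h)
    · intro h; norm_num at h
    · intro h; exact h1 (by linear_combination -h)
  have c13 : IsCoprime (Polynomial.X - Polynomial.C (-κ))
      ((Polynomial.X - Polynomial.C (1 - κ)) * (Polynomial.X - Polynomial.C (-1)) *
        (Polynomial.X - Polynomial.C κ)) := by
    refine ((cop _ _ ?_).mul_right (cop _ _ ?_)).mul_right (cop _ _ ?_)
    · intro h; exact zero_ne_one (by linear_combination h : (0:F) = 1)
    · intro h; exact h1 (by linear_combination -h)
    · intro h; exact h0 (mul_left_cancel₀ (two_ne_zero) (by linear_combination -h : (2:F)*κ = 2*0))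
  exact ((c11.mul_left c12).mul_left c13).neg_right

lemma hP_X_ne_zero : hP (Polynomial.X : Polynomial F) ≠ 0 := by
  intro h
  have := congrArg (Polynomial.aeval (2 : F)) h
  rw [map_hP (Polynomial.aeval (2:F)) Polynomial.X, Polynomial.aeval_X, map_zero] at this
  have h3 : (2:F) + 1 - algebraMap F F κ ≠ 0 := by
    simpa [sub_eq_zero] using fun hc => κ_ne_three (by linear_combination -hc)
  have h2 : (2:F) + algebraMap F F κ ≠ 0 := by
    simpa using fun hc => κ_ne_neg_two (by linear_combination hc)
  have h1 : (2:F) - 1 ≠ 0 := by norm_num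
  exact (mul_ne_zero (mul_ne_zero h3 h1) h2) (by simpa [hP] using this)

/-- If `h(z₁-z₂)·S(z₁,z₂)` is symmetric in `z₁, z₂`, then `S = h(z₂-z₁)·P` for some
symmetric polynomial `P`. -/
theorem statement9 (S : MvPolynomial (Fin 2) F)
    (hS : rename (⇑(Equiv.swap (0 : Fin 2) 1)) (hP (X 0 - X 1) * S) = hP (X 0 - X 1) * S) :
    ∃ P : MvPolynomial (Fin 2) F,
      rename (⇑(Equiv.swap (0 : Fin 2) 1)) P = P ∧ S = hP (X 1 - X 0) * P := by
  set σ := rename (R := F) (⇑(Equiv.swap (0 : Fin 2) 1)) with hσ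
  set A : MvPolynomial (Fin 2) F := hP (X 0 - X 1) with hA
  set B : MvPolynomial (Fin 2) F := hP (X 1 - X 0) with hB
  have hσA : σ A = B := by
    rw [hA, hB, hσ, map_hP (rename (⇑(Equiv.swap (0 : Fin 2) 1)))]
    simp [Equiv.swap_apply_left, Equiv.swap_apply_right]
  have hσB : σ B = A := by
    rw [hA, hB, hσ, map_hP (rename (⇑(Equiv.swap (0 : Fin 2) 1)))]
    simp [Equiv.swap_apply_left, Equiv.swap_apply_right]
  -- A and B as images of the univariate polys
  have hAval : A = Polynomial.aeval (X 0 - X 1 : MvPolynomial (Fin 2) F)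
      (hP (Polynomial.X : Polynomial F)) := by
    rw [map_hP, Polynomial.aeval_X]
  have hBval : B = Polynomial.aeval (X 0 - X 1 : MvPolynomial (Fin 2) F)
      (hP (-(Polynomial.X : Polynomial F))) := by
    rw [map_hP]; simp [hB]
  have hcop : IsCoprime A B := by
    rw [hAval, hBval]
    exact coprime_hP.map _
  -- A ≠ 0
  have hAne : A ≠ 0 := by
    intro h
    apply hP_X_ne_zero
    have := congrArg (MvPolynomial.aeval (fun i : Fin 2 => if i = 0 then Polynomial.X else 0 :
      Fin 2 → Polynomial F)) h
    rw [hAval, map_zero, ← Polynomial.aeval_algHom_apply] at this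
    simpa using this
  have hBne : B ≠ 0 := by
    rw [← hσA]
    intro h
    exact hAne ((MvPolynomial.rename_injective _ (Equiv.swap (0:Fin 2) 1).injective)
      (by simpa using h))
  -- key identity : B * σ S = A * S
  have key : B * σ S = A * S := by
    have h2 := hS
    rw [map_mul, hσA] at h2
    exact h2
  -- B divides S
  obtain ⟨P, hPdef⟩ : B ∣ S := (hcop.symm).dvd_of_dvd_mul_left ⟨σ S, key.symm⟩
  refine ⟨P, ?_, hPdef⟩
  -- symmetry of P
  have hσS : σ S = A * σ P := by
    rw [hPdef, map_mul, hσB]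
  have : A * (B * σ P) = A * (B * P) := by
    have := key
    rw [hσS, hPdef] at this
    ring_nf at this ⊢
    linear_combination this
  exact mul_left_cancel₀ hBne (mul_left_cancel₀ hAne this)
end
end

section
/- Let R be an associative ℚ-algebra, e ∈ R, and x₁, x₂, x₃, … ∈ R elements satisfying [e, x_n] = n·x_{n+1} for all n ≥ 1. Let r ≥ 3 and suppose [x_a, x_b] = 0 for all a, b ≥ 1 with a + b < r. Then for all l ≥ 2 and l' ≥ 1 with l + l' = r, one has (l−1)·[x_l, x_{l'}] = −l'·[x_{l−1}, x_{l'+1}]. -/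
/-- Equation (4.2) of the paper: if `[e, xₙ] = n·x_{n+1}` for `n ≥ 1` and
`[x_a, x_b] = 0` whenever `a + b < r` (with `r ≥ 3`), then for `l + l' = r`,
`l ≥ 2`, `l' ≥ 1` one has `(l-1)·[x_l, x_{l'}] = -l'·[x_{l-1}, x_{l'+1}]`. -/
theorem statement12 (R : Type*) [Ring R] [Algebra ℚ R] (e : R) (x : ℕ → R)
    (hx : ∀ n : ℕ, 1 ≤ n → e * x n - x n * e = n • x (n + 1))
    (r : ℕ) (hr : 3 ≤ r)
    (hcomm : ∀ a b : ℕ, 1 ≤ a → 1 ≤ b → a + b < r → x a * x b - x b * x a = 0) :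
    ∀ l l' : ℕ, 2 ≤ l → 1 ≤ l' → l + l' = r →
      (l - 1) • (x l * x l' - x l' * x l)
        = -(l' • (x (l - 1) * x (l' + 1) - x (l' + 1) * x (l - 1))) := by
  intro l l' hl hl' hsum
  have h1 := hx (l - 1) (by omega)
  have h2 := hx l' hl'
  have hc := hcomm (l - 1) l' (by omega) hl' (by omega)
  have hl1 : l - 1 + 1 = l := by omega
  rw [hl1] at h1
  set A := x (l - 1)
  set B := x l'
  set L := x l
  set C := x (l' + 1)
  have key : (e * A - A * e) * B - B * (e * A - A * e)
      + (A * (e * B - B * e) - (e * B - B * e) * A)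
      = e * (A * B - B * A) - (A * B - B * A) * e := by noncomm_ring
  rw [h1, h2, hc] at key
  simp only [mul_zero, zero_mul, sub_zero, smul_mul_assoc, mul_smul_comm,
    ← smul_sub] at key
  exact eq_neg_of_add_eq_zero_left key
end

section
/- Let R be an associative ℚ-algebra, e ∈ R, and x₁, x₂, x₃, … ∈ R elements satisfying [e, x_n] = n·x_{n+1} for all n ≥ 1. Let k ≥ 1 and suppose [x_a, x_b] = 0 for all a, b ≥ 1 with a + b < 2k. Then [x_l, x_{l'}] = 0 for all l, l' ≥ 1 with l + l' = 2k. -/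
/-- The even case of Lemma 4.2: if `[e, xₙ] = n·x_{n+1}` for `n ≥ 1` and
`[x_a, x_b] = 0` whenever `a + b < 2k` (with `k ≥ 1`), then `[x_l, x_{l'}] = 0`
whenever `l + l' = 2k`. -/
theorem statement13 (R : Type*) [Ring R] [Algebra ℚ R] (e : R) (x : ℕ → R)
    (hx : ∀ n : ℕ, 1 ≤ n → e * x n - x n * e = n • x (n + 1))
    (k : ℕ) (hk : 1 ≤ k)
    (hcomm : ∀ a b : ℕ, 1 ≤ a → 1 ≤ b → a + b < 2 * k → x a * x b - x b * x a = 0) :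
    ∀ l l' : ℕ, 1 ≤ l → 1 ≤ l' → l + l' = 2 * k → x l * x l' - x l' * x l = 0 := by
  have step : ∀ a b : ℕ, 1 ≤ a → 1 ≤ b → a + b + 1 = 2 * k →
      (a : ℚ) • (x (a+1) * x b - x b * x (a+1))
        + (b : ℚ) • (x a * x (b+1) - x (b+1) * x a) = 0 := by
    intro a b ha hb hab
    have h1 := hx a ha
    have h2 := hx b hb
    have hc := hcomm a b ha hb (by omega)
    have A1 : a • (x (a+1) * x b) = (e * x a - x a * e) * x b := by
      rw [h1, smul_mul_assoc]
    have A2 : a • (x b * x (a+1)) = x b * (e * x a - x a * e) := by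
      rw [h1, mul_smul_comm]
    have A3 : b • (x a * x (b+1)) = x a * (e * x b - x b * e) := by
      rw [h2, mul_smul_comm]
    have A4 : b • (x (b+1) * x a) = (e * x b - x b * e) * x a := by
      rw [h2, smul_mul_assoc]
    rw [Nat.cast_smul_eq_nsmul, Nat.cast_smul_eq_nsmul]
    calc a • (x (a+1) * x b - x b * x (a+1)) + b • (x a * x (b+1) - x (b+1) * x a)
        = (a • (x (a+1) * x b) - a • (x b * x (a+1)))
            + (b • (x a * x (b+1)) - b • (x (b+1) * x a)) := by
          rw [smul_sub, smul_sub]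
      _ = ((e * x a - x a * e) * x b - x b * (e * x a - x a * e))
            + (x a * (e * x b - x b * e) - (e * x b - x b * e) * x a) := by
          rw [A1, A2, A3, A4]
      _ = e * (x a * x b - x b * x a) - (x a * x b - x b * x a) * e := by noncomm_ring
      _ = 0 := by rw [hc]; simp
  set g : ℕ → R := fun j => x j * x (2*k - j) - x (2*k - j) * x j with hg
  have rel : ∀ a : ℕ, 1 ≤ a → a + 1 ≤ 2*k - 1 →
      (a : ℚ) • g (a+1) + ((2*k - 1 - a : ℕ) : ℚ) • g a = 0 := by
    intro a ha ha2
    have hb : 1 ≤ 2*k - 1 - a := by omega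
    have h := step a (2*k - 1 - a) ha hb (by omega)
    have e1 : 2*k - (a+1) = 2*k - 1 - a := by omega
    have e2 : 2*k - a = (2*k - 1 - a) + 1 := by omega
    simp only [hg]
    rw [e1, e2]
    exact h
  have gzero : ∀ c : ℚ, ∀ r : R, c ≠ 0 → c • r = 0 → r = 0 := by
    intro c r hc h
    have := congrArg (fun y => c⁻¹ • y) h
    simpa [smul_smul, inv_mul_cancel₀ hc] using this
  have gk : g k = 0 := by
    simp only [hg]
    have : 2*k - k = k := by omega
    rw [this]
    exact sub_self _
  have up : ∀ m : ℕ, k + m ≤ 2*k - 1 → g (k + m) = 0 := by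
    intro m
    induction m with
    | zero => intro _; simpa using gk
    | succ n ih =>
      intro hm
      have h0 := ih (by omega)
      have hr := rel (k + n) (by omega) (by omega)
      rw [h0, smul_zero, add_zero] at hr
      have hz : ((k + n : ℕ) : ℚ) ≠ 0 := Nat.cast_ne_zero.mpr (by omega)
      exact gzero _ _ hz hr
  have down : ∀ m : ℕ, m ≤ k - 1 → g (k - m) = 0 := by
    intro m
    induction m with
    | zero => intro _; simpa using gk
    | succ n ih =>
      intro hm
      have h0 := ih (by omega)
      have hj1 : (k - (n+1)) + 1 = k - n := by omega
      have hr := rel (k - (n+1)) (by omega) (by omega)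
      rw [hj1, h0, smul_zero, zero_add] at hr
      have hz : ((2*k - 1 - (k - (n+1)) : ℕ) : ℚ) ≠ 0 := Nat.cast_ne_zero.mpr (by omega)
      exact gzero _ _ hz hr
  intro l l' hl hl' hll
  have hl2 : l ≤ 2*k - 1 := by omega
  have hl' : l' = 2*k - l := by omega
  subst hl'
  have : g l = 0 := by
    rcases le_or_gt l k with h | h
    · have := down (k - l) (by omega)
      rwa [show k - (k - l) = l by omega] at this
    · have := up (l - k) (by omega)
      rwa [show k + (l - k) = l by omega] at this
  simpa [hg] using this
end

section
/- Let R be an associative ℚ-algebra, e, f ∈ R, and x₁, x₂, x₃, … ∈ R elements satisfying [e, x_n] = n·x_{n+1} and [f, x_n] = 2n·x_{n+2} for all n ≥ 1. Let k ≥ 2 and suppose [x_a, x_b] = 0 for all a, b ≥ 1 with a + b < 2k + 1. Then [x_l, x_{l'}] = 0 for all l, l' ≥ 1 with l + l' = 2k + 1; in particular [x_{k+2}, x_{k−1}] = 0 and [x_{k+1}, x_k] = 0. -/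
private lemma comm_der {R : Type*} [Ring R] [Module ℚ R] [SMulCommClass ℚ R R]
    [IsScalarTower ℚ R R]
    (e p q p' q' : R) (α β : ℚ)
    (hp : e * p - p * e = α • p') (hq : e * q - q * e = β • q') :
    α • (p' * q - q * p') + β • (p * q' - q' * p)
      = e * (p * q - q * p) - (p * q - q * p) * e := by
  have key : e * (p * q - q * p) - (p * q - q * p) * e
      = ((e * p - p * e) * q - q * (e * p - p * e))
        + (p * (e * q - q * e) - (e * q - q * e) * p) := by noncomm_ring
  rw [key, hp, hq]
  simp [smul_sub, smul_mul_assoc, mul_smul_comm]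

/-- The odd case of Lemma 4.2: if `[e, xₙ] = n·x_{n+1}` and `[f, xₙ] = 2n·x_{n+2}`
for `n ≥ 1`, and `[x_a, x_b] = 0` whenever `a + b < 2k+1` (with `k ≥ 2`), then
`[x_l, x_{l'}] = 0` whenever `l + l' = 2k+1`; in particular
`[x_{k+2}, x_{k-1}] = 0` and `[x_{k+1}, x_k] = 0`. -/
theorem statement14 (R : Type*) [Ring R] [Algebra ℚ R] (e f : R) (x : ℕ → R)
    (he : ∀ n : ℕ, 1 ≤ n → e * x n - x n * e = n • x (n + 1))
    (hf : ∀ n : ℕ, 1 ≤ n → f * x n - x n * f = (2 * n) • x (n + 2))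
    (k : ℕ) (hk : 2 ≤ k)
    (hcomm : ∀ a b : ℕ, 1 ≤ a → 1 ≤ b → a + b < 2 * k + 1 → x a * x b - x b * x a = 0) :
    (∀ l l' : ℕ, 1 ≤ l → 1 ≤ l' → l + l' = 2 * k + 1 → x l * x l' - x l' * x l = 0) ∧
    x (k + 2) * x (k - 1) - x (k - 1) * x (k + 2) = 0 ∧
    x (k + 1) * x k - x k * x (k + 1) = 0 := by
  have he' : ∀ n : ℕ, 1 ≤ n → e * x n - x n * e = (n : ℚ) • x (n + 1) := fun n hn => by
    rw [he n hn, Nat.cast_smul_eq_nsmul]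
  have hf' : ∀ n : ℕ, 1 ≤ n → f * x n - x n * f = ((2 * n : ℕ) : ℚ) • x (n + 2) := fun n hn => by
    rw [hf n hn, Nat.cast_smul_eq_nsmul]
  have hE : ∀ a b : ℕ, 1 ≤ a → 1 ≤ b → a + b = 2 * k →
      (a : ℚ) • (x (a+1) * x b - x b * x (a+1))
        + (b : ℚ) • (x a * x (b+1) - x (b+1) * x a) = 0 := by
    intro a b ha hb hab
    have h0 : x a * x b - x b * x a = 0 := hcomm a b ha hb (by omega)
    have hc := comm_der e (x a) (x b) (x (a+1)) (x (b+1)) a b (he' a ha) (he' b hb)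
    rw [h0] at hc
    simpa using hc
  have hF : ∀ a b : ℕ, 1 ≤ a → 1 ≤ b → a + b = 2 * k - 1 →
      ((2*a : ℕ) : ℚ) • (x (a+2) * x b - x b * x (a+2))
        + ((2*b : ℕ) : ℚ) • (x a * x (b+2) - x (b+2) * x a) = 0 := by
    intro a b ha hb hab
    have h0 : x a * x b - x b * x a = 0 := hcomm a b ha hb (by omega)
    have hc := comm_der f (x a) (x b) (x (a+2)) (x (b+2)) ((2*a : ℕ) : ℚ) ((2*b : ℕ) : ℚ)
      (hf' a ha) (hf' b hb)
    rw [h0] at hc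
    simpa using hc
  set A := x 1 * x (2*k) - x (2*k) * x 1 with hA
  set B := x 2 * x (2*k-1) - x (2*k-1) * x 2 with hB
  set C := x 3 * x (2*k-2) - x (2*k-2) * x 3 with hC
  have i1 : 2*k-1+1 = 2*k := by omega
  have i2 : 2*k-2+1 = 2*k-1 := by omega
  have i3 : 2*k-2+2 = 2*k := by omega
  have h12 : B + ((2*k-1 : ℕ):ℚ) • A = 0 := by
    have h := hE 1 (2*k-1) (by omega) (by omega) (by omega)
    rw [i1] at h; norm_num at h; exact h
  have h23 : (2:ℚ) • C + ((2*k-2 : ℕ):ℚ) • B = 0 := by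
    have h := hE 2 (2*k-2) (by omega) (by omega) (by omega)
    rw [i2] at h; norm_num at h; exact h
  have h13 : (2:ℚ) • C + (2 * ((2*k-2 : ℕ):ℚ)) • A = 0 := by
    have h := hF 1 (2*k-2) (by omega) (by omega) (by omega)
    rw [i3] at h; norm_num at h; exact h
  have hA0 : A = 0 := by
    have hq : (((2*k-2 : ℕ):ℚ) * (-((2*k-1 : ℕ):ℚ)) - 2 * ((2*k-2 : ℕ):ℚ)) ≠ 0 := by
      have h2 : (2:ℕ) ≤ k := hk
      rw [Nat.cast_sub (by omega : 1 ≤ 2*k), Nat.cast_sub (by omega : 2 ≤ 2*k)]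
      push_cast
      have : (2:ℚ) ≤ (k:ℚ) := by exact_mod_cast h2
      nlinarith
    have hBval : B = (-((2*k-1 : ℕ):ℚ)) • A := by
      rw [eq_neg_of_add_eq_zero_left h12, neg_smul]
    have heq : (((2*k-2 : ℕ):ℚ) * (-((2*k-1 : ℕ):ℚ))) • A = (2 * ((2*k-2 : ℕ):ℚ)) • A := by
      have h := neg_injective ((eq_neg_of_add_eq_zero_left h23).symm.trans
        (eq_neg_of_add_eq_zero_left h13))
      rwa [hBval, smul_smul] at h
    have key : (((2*k-2 : ℕ):ℚ) * (-((2*k-1 : ℕ):ℚ)) - 2 * ((2*k-2 : ℕ):ℚ)) • A = 0 := by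
      rw [sub_smul, heq, sub_self]
    exact (smul_eq_zero_iff_right hq).mp key
  -- propagate: all c_m = 0
  have main : ∀ m : ℕ, m ≤ 2*k → 1 ≤ m → x m * x (2*k+1-m) - x (2*k+1-m) * x m = 0 := by
    intro m
    induction m with
    | zero => intro _ h; omega
    | succ n ih =>
      intro hm hn
      rcases Nat.eq_zero_or_pos n with h0 | h0
      · subst h0
        have : 2*k+1-1 = 2*k := by omega
        rw [this]; exact hA0
      · have hb : 1 ≤ 2*k - n := by omega
        have h := hE n (2*k - n) h0 hb (by omega)
        have j1 : 2*k - n + 1 = 2*k+1-n := by omega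
        rw [j1] at h
        rw [ih (by omega) h0, smul_zero, add_zero] at h
        have j2 : 2*k+1-(n+1) = 2*k-n := by omega
        rw [j2]
        have hn0 : (n:ℚ) ≠ 0 := Nat.cast_ne_zero.mpr (by omega)
        exact (smul_eq_zero_iff_right hn0).mp h
  have part1 : ∀ l l' : ℕ, 1 ≤ l → 1 ≤ l' → l + l' = 2 * k + 1 →
      x l * x l' - x l' * x l = 0 := by
    intro l l' hl hl' hll
    have : l' = 2*k+1-l := by omega
    rw [this]
    exact main l (by omega) hl
  refine ⟨part1, ?_, ?_⟩
  · have h1 : (1:ℕ) ≤ k - 1 := by omega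
    exact part1 (k+2) (k-1) (by omega) h1 (by omega)
  · exact part1 (k+1) k (by omega) (by omega) (by omega)
end

section
/- Let R be an associative ℚ-algebra and e, f, x₁ ∈ R. Define x_{n+1} = (1/n)·[e, x_n] for n ≥ 1 (equivalently, [e, x_n] = n·x_{n+1} for all n ≥ 1). Assume [f, x_n] = 2n·x_{n+2} for all n ≥ 1, and [x₂, x₁] = 0. Then [x_m, x_n] = 0 for all m, n ≥ 1; that is, the elements x_n pairwise commute. -/
/-- Lemma 4.2 of the paper: if `[e, xₙ] = n·x_{n+1}` (equivalently,
`x_{n+1} = (1/n)·[e, xₙ]`) and `[f, xₙ] = 2n·x_{n+2}` for all `n ≥ 1`, and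
`[x₂, x₁] = 0`, then the elements `xₙ` (`n ≥ 1`) pairwise commute. -/
theorem statement15 (R : Type*) [Ring R] [Algebra ℚ R] (e f : R) (x : ℕ → R)
    (he : ∀ n : ℕ, 1 ≤ n → e * x n - x n * e = n • x (n + 1))
    (hf : ∀ n : ℕ, 1 ≤ n → f * x n - x n * f = (2 * n) • x (n + 2))
    (h21 : x 2 * x 1 - x 1 * x 2 = 0) :
    ∀ m n : ℕ, 1 ≤ m → 1 ≤ n → x m * x n = x n * x m := by
  have cancel : ∀ (q : ℚ) (r : R), q ≠ 0 → q • r = 0 → r = 0 := by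
    intro q r hq h
    have := congrArg (fun y => q⁻¹ • y) h
    simpa [smul_smul, inv_mul_cancel₀ hq] using this
  -- rephrase hypotheses with ℚ-scalars
  have he' : ∀ n : ℕ, 1 ≤ n → e * x n - x n * e = (n : ℚ) • x (n + 1) := by
    intro n hn; rw [he n hn, Nat.cast_smul_eq_nsmul]
  have hf' : ∀ n : ℕ, 1 ≤ n → f * x n - x n * f = ((2 * n : ℕ) : ℚ) • x (n + 2) := by
    intro n hn; rw [hf n hn, Nat.cast_smul_eq_nsmul]
  set D : ℕ → ℕ → R := fun a b => x a * x b - x b * x a with hD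
  have keyE : ∀ m n : ℕ, 1 ≤ m → 1 ≤ n → D m n = 0 →
      (m : ℚ) • D (m + 1) n + (n : ℚ) • D m (n + 1) = 0 := by
    intro m n hm hn h0
    have jac : e * (x m * x n - x n * x m) - (x m * x n - x n * x m) * e
        = ((e * x m - x m * e) * x n - x n * (e * x m - x m * e))
          + (x m * (e * x n - x n * e) - (e * x n - x n * e) * x m) := by noncomm_ring
    have h0' : x m * x n - x n * x m = 0 := h0
    rw [h0', he' m hm, he' n hn] at jac
    simp only [mul_zero, zero_mul, sub_zero, smul_mul_assoc, mul_smul_comm, ← smul_sub] at jac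
    exact jac.symm
  have keyF : ∀ m n : ℕ, 1 ≤ m → 1 ≤ n → D m n = 0 →
      ((2 * m : ℕ) : ℚ) • D (m + 2) n + ((2 * n : ℕ) : ℚ) • D m (n + 2) = 0 := by
    intro m n hm hn h0
    have jac : f * (x m * x n - x n * x m) - (x m * x n - x n * x m) * f
        = ((f * x m - x m * f) * x n - x n * (f * x m - x m * f))
          + (x m * (f * x n - x n * f) - (f * x n - x n * f) * x m) := by noncomm_ring
    have h0' : x m * x n - x n * x m = 0 := h0
    rw [h0', hf' m hm, hf' n hn] at jac
    simp only [mul_zero, zero_mul, sub_zero, smul_mul_assoc, mul_smul_comm, ← smul_sub] at jac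
    exact jac.symm
  have main : ∀ s m n : ℕ, 1 ≤ m → 1 ≤ n → m + n ≤ s → D m n = 0 := by
    intro s
    induction s with
    | zero => intro m n hm hn h; omega
    | succ s ih =>
      intro m n hm hn hmn
      by_cases hle : m + n ≤ s
      · exact ih m n hm hn hle
      have hsum : m + n = s + 1 := by omega
      by_cases h3 : m + n ≤ 3
      · -- small cases
        have hcases : (m = 1 ∧ n = 1) ∨ (m = 1 ∧ n = 2) ∨ (m = 2 ∧ n = 1) := by omega
        rcases hcases with ⟨rfl, rfl⟩ | ⟨rfl, rfl⟩ | ⟨rfl, rfl⟩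
        · exact sub_self _
        · show x 1 * x 2 - x 2 * x 1 = 0
          have : x 1 * x 2 - x 2 * x 1 = -(x 2 * x 1 - x 1 * x 2) := by noncomm_ring
          rw [this, h21, neg_zero]
        · exact h21
      · -- m + n = s + 1 ≥ 4, so s = q + 3 for some q
        obtain ⟨q, rfl⟩ : ∃ q, s = q + 3 := ⟨s - 3, by omega⟩
        -- step 1 : D 1 (q+3) = 0
        have A := keyE 2 (q + 1) (by omega) (by omega)
          (ih 2 (q + 1) (by omega) (by omega) (by omega))
        have B := keyE 1 (q + 2) (by omega) (by omega)
          (ih 1 (q + 2) (by omega) (by omega) (by omega))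
        have Dd := keyF 1 (q + 1) (by omega) (by omega)
          (ih 1 (q + 1) (by omega) (by omega) (by omega))
        have hq3 : (2 : ℚ) • D 3 (q + 1) + ((q:ℚ) + 1) • D 2 (q + 2) = 0 := by
          push_cast at A; convert A using 3 <;> omega
        have hq2 : (1 : ℚ) • D 2 (q + 2) + ((q:ℚ) + 2) • D 1 (q + 3) = 0 := by
          push_cast at B; convert B using 3 <;> omega
        have hq1 : (2 : ℚ) • D 3 (q + 1) + (2 * ((q:ℚ) + 1)) • D 1 (q + 3) = 0 := by
          push_cast at Dd; convert Dd using 3 <;> omega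
        have hc : (((q:ℚ) + 1) * ((q:ℚ) + 4)) • D 1 (q + 3) = 0 := by
          linear_combination (norm := module) ((q:ℚ) + 1) • hq2 - hq3 + hq1
        have hqne : ((q:ℚ) + 1) * ((q:ℚ) + 4) ≠ 0 := by positivity
        have u1 : D 1 (q + 3) = 0 := cancel _ _ hqne hc
        -- step 2 : propagate along antidiagonal
        have diag : ∀ a, ∀ b : ℕ, 1 ≤ a → 1 ≤ b → a + b = q + 4 → D a b = 0 := by
          intro a
          induction a with
          | zero => intro b h; omega
          | succ a iha =>
            intro b ha hb hab
            rcases Nat.eq_zero_or_pos a with h0 | hpos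
            · subst h0
              have : b = q + 3 := by omega
              rw [this]; exact u1
            · have h1 := keyE a b hpos hb (ih a b hpos hb (by omega))
              have h2 : D a (b + 1) = 0 := iha (b + 1) hpos (by omega) (by omega)
              rw [h2, smul_zero, add_zero] at h1
              exact cancel _ _ (Nat.cast_ne_zero.mpr (by omega)) h1
        exact diag m n hm hn (by omega)
  intro m n hm hn
  have := main (m + n) m n hm hn le_rfl
  have h : x m * x n - x n * x m = 0 := this
  exact sub_eq_zero.mp h
end
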